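/- arXiv:1007.5408 — 3 statements merged into one kernel-verified Lean document; each statement's English description precedes it below -/
import Mathlib

section
/- Let n ≥ 1, a ∈ ℝⁿ, α ∈ (0,1) and ᾱ = 1−α. Let z be a standard Gaussian random vector on ℝⁿ, X ∈ {−1,+1} independent of z with P(X=−1) = α, and y = X·a + z. Then the mutual information expression −E[log₂(α·e^{−‖y+a‖²/2} + ᾱ·e^{−‖y−a‖²/2})] − (n/2)·log₂(e) equals I(α, ‖a‖²); in particular, the binary-input vector-output additive Gaussian channel y = X·a + z is equivalent, in terms of mutual information, to a binary-input scalar additive Gaussian channel with SNR γ = ‖a‖², and the mutual information depends on a only through ‖a‖². -/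
open MeasureTheory ProbabilityTheory Real

/-- Binary entropy function (in bits). -/
noncomputable def binEnt (p : ℝ) : ℝ :=
  -(p * Real.logb 2 p) - (1 - p) * Real.logb 2 (1 - p)

/-- Squared Euclidean norm on `ℝⁿ`. -/
noncomputable def normSq {n : ℕ} (v : Fin n → ℝ) : ℝ := ∑ i, (v i) ^ 2

/-- The standard Gaussian measure on `ℝⁿ` (iid `N(0,1)` entries). -/
noncomputable def stdGaussian (n : ℕ) : Measure (Fin n → ℝ) :=
  Measure.pi fun _ => gaussianReal 0 1

/-- `I(α, γ)`: the mutual information of a binary-input scalar additive Gaussian channel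
with SNR `γ`, a priori input probabilities `α, 1-α`, and `Z ~ N(0,1)`. -/
noncomputable def Iscalar (α γ : ℝ) : ℝ :=
  binEnt α
    - α * ∫ z, Real.logb 2 (1 + ((1 - α) / α)
          * Real.exp (2 * Real.sqrt γ * z - 2 * γ)) ∂(gaussianReal 0 1)
    - (1 - α) * ∫ z, Real.logb 2 (1 + (α / (1 - α))
          * Real.exp (2 * Real.sqrt γ * z - 2 * γ)) ∂(gaussianReal 0 1)

/-!
Factoring the Gaussian weight `exp (-‖z‖²/2)` out of the mixture density splits `log₂` of it
into `-‖z‖²/2 · log₂ e`, whose mean `-(n/2) log₂ e` cancels the normalising term, the constant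
`log₂ α` (resp. `log₂ (1-α)`), which produces the binary entropy, and a term depending on `z`
only through `⟨a, z⟩`. Under the standard Gaussian, `⟨a, z⟩ ~ N(0, ‖a‖²)` has the law of
`√γ · Z` with `γ = ‖a‖²`, which turns that last expectation into the scalar one.
-/

open Matrix

lemma normSq_nonneg {n : ℕ} (v : Fin n → ℝ) : 0 ≤ normSq v :=
  Finset.sum_nonneg fun _ _ => sq_nonneg _

lemma normSq_neg {n : ℕ} (v : Fin n → ℝ) : normSq (-v) = normSq v := by
  simp [normSq]

lemma normSq_sub_two_smul {n : ℕ} (z a : Fin n → ℝ) :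
    normSq (z - 2 • a) = normSq z - 4 * (a ⬝ᵥ z) + 4 * normSq a := by
  simp only [normSq, dotProduct, Pi.sub_apply, Pi.smul_apply, Finset.mul_sum,
    ← Finset.sum_sub_distrib, ← Finset.sum_add_distrib]
  exact Finset.sum_congr rfl fun i _ => by ring

lemma logb_mul_exp_add_mul_exp {b p q : ℝ} (hp : 0 < p) (hq : 0 ≤ q) (A B : ℝ) :
    logb b (p * exp A + q * exp B)
      = A * logb b (exp 1) + logb b p + logb b (1 + q / p * exp (B - A)) := by
  have hpos : 0 < 1 + q / p * exp (B - A) := by positivity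
  have hfactor : p * exp A + q * exp B = exp A * (p * (1 + q / p * exp (B - A))) := by
    rw [exp_sub]
    field_simp
  rw [hfactor, logb_mul (exp_ne_zero _) (by positivity), logb_mul hp.ne' hpos.ne', add_assoc]
  congr 1
  simp only [logb, log_exp]
  ring

lemma abs_log_one_add_mul_exp_le {c : ℝ} (hc : 0 ≤ c) (u : ℝ) :
    |log (1 + c * exp u)| ≤ log (1 + c) + |u| := by
  have hexp : exp u ≤ exp |u| := exp_le_exp.mpr (le_abs_self u)
  have hone : 1 ≤ exp |u| := one_le_exp (abs_nonneg u)
  rw [abs_of_nonneg (log_nonneg (by nlinarith [exp_pos u])), ← log_exp |u|,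
    ← log_mul (by positivity) (exp_ne_zero _)]
  exact log_le_log (by positivity) (by nlinarith)

lemma Integrable.logb_one_add_mul_exp {Ω : Type*} [MeasurableSpace Ω] {μ : Measure Ω}
    [IsFiniteMeasure μ] {u : Ω → ℝ} (hu : Integrable u μ) {c : ℝ} (hc : 0 ≤ c) (b : ℝ) :
    Integrable (fun x => logb b (1 + c * exp (u x))) μ := by
  have hmeas : Measurable fun y => log (1 + c * exp y) := by fun_prop
  have hlog : Integrable (fun x => log (1 + c * exp (u x))) μ :=
    Integrable.mono' ((integrable_const _).add hu.abs)
      (hmeas.comp_aemeasurable hu.aemeasurable).aestronglyMeasurable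
      (ae_of_all _ fun x => abs_log_one_add_mul_exp_le hc (u x))
  exact hlog.div_const (log b)

instance isProbabilityMeasure_stdGaussian_pi (n : ℕ) : IsProbabilityMeasure (stdGaussian n) :=
  inferInstanceAs (IsProbabilityMeasure (Measure.pi _))

/-- Transported by `toLp`, `stdGaussian n` is Mathlib's standard Gaussian on
`EuclideanSpace ℝ (Fin n)`, a Gaussian measure whose image under the form `⟪b, ·⟫` is
`N(0, ‖b‖²)`. -/
lemma map_dotProduct_stdGaussian {n : ℕ} (b : Fin n → ℝ) :
    (stdGaussian n).map (b ⬝ᵥ ·) = gaussianReal 0 (normSq b).toNNReal := by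
  let L : StrongDual ℝ (EuclideanSpace ℝ (Fin n)) := innerSL ℝ (WithLp.toLp 2 b)
  have hL : (b ⬝ᵥ ·) = L ∘ WithLp.toLp 2 := by
    ext z
    simp [L, dotProduct, EuclideanSpace.inner_eq_star_dotProduct, mul_comm]
  rw [hL, ← Measure.map_map (by fun_prop) (by fun_prop), _root_.stdGaussian, map_pi_eq_stdGaussian,
    IsGaussian.map_eq_gaussianReal, integral_strongDual_stdGaussian, variance_dual_stdGaussian,
    innerSL_apply_norm, EuclideanSpace.norm_sq_eq]
  simp [normSq]

lemma integral_comp_dotProduct_stdGaussian {n : ℕ} (b : Fin n → ℝ) {g : ℝ → ℝ}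
    (hg : Measurable g) :
    ∫ z, g (b ⬝ᵥ z) ∂(stdGaussian n) = ∫ t, g (√(normSq b) * t) ∂(gaussianReal 0 1) := by
  have hlaw : (stdGaussian n).map (b ⬝ᵥ ·) = (gaussianReal 0 1).map (√(normSq b) * ·) := by
    rw [map_dotProduct_stdGaussian, gaussianReal_map_const_mul, mul_zero, mul_one]
    congr
    ext
    simp [normSq_nonneg]
  rw [← integral_map (by fun_prop) hg.aestronglyMeasurable, hlaw,
    integral_map (by fun_prop) hg.aestronglyMeasurable]

lemma integrable_sq_gaussianReal : Integrable (fun x : ℝ => x ^ 2) (gaussianReal 0 1) :=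
  (memLp_id_gaussianReal 2).integrable_sq

lemma integrable_normSq_stdGaussian (n : ℕ) : Integrable normSq (stdGaussian n) :=
  integrable_finsetSum _ fun _ _ => integrable_comp_eval (f := fun x => x ^ 2)
    integrable_sq_gaussianReal

lemma integral_normSq_stdGaussian (n : ℕ) : ∫ z, normSq z ∂(stdGaussian n) = n := by
  have hsq := integrable_sq_gaussianReal
  have h1 : ∫ x, x ^ 2 ∂(gaussianReal 0 1) = 1 := by
    rw [← variance_of_integral_eq_zero (X := fun x => x) aemeasurable_id' (by simp)]
    simp
  unfold normSq _root_.stdGaussian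
  rw [integral_finsetSum _ (f := fun (i : Fin n) (z : Fin n → ℝ) => z i ^ 2)
    fun _ _ => integrable_comp_eval (f := fun x => x ^ 2) hsq]
  simp [integral_comp_eval (μ := fun _ : Fin n => gaussianReal 0 1) (f := fun x => x ^ 2)
    hsq.aestronglyMeasurable, h1]

lemma integrable_dotProduct_stdGaussian {n : ℕ} (b : Fin n → ℝ) :
    Integrable (b ⬝ᵥ ·) (stdGaussian n) :=
  integrable_finsetSum _ fun i _ => (integrable_eval IsGaussian.integrable_id).const_mul (b i)

lemma logb_gaussian_mixture {n : ℕ} {p q : ℝ} (hp : 0 < p) (hq : 0 ≤ q) (a z : Fin n → ℝ) :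
    logb 2 (p * exp (-(normSq z) / 2) + q * exp (-(normSq (z - 2 • a)) / 2))
      = -(normSq z) / 2 * logb 2 (exp 1) + logb 2 p
        + logb 2 (1 + q / p * exp (2 * (a ⬝ᵥ z) - 2 * normSq a)) := by
  rw [logb_mul_exp_add_mul_exp hp hq, normSq_sub_two_smul]
  ring_nf

lemma integral_logb_gaussian_mixture {n : ℕ} {p q : ℝ} (hp : 0 < p) (hq : 0 ≤ q)
    (a : Fin n → ℝ) :
    ∫ z, logb 2 (p * exp (-(normSq z) / 2) + q * exp (-(normSq (z - 2 • a)) / 2))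
        ∂(stdGaussian n)
      = -((n : ℝ) / 2) * logb 2 (exp 1) + logb 2 p
        + ∫ t, logb 2 (1 + q / p * exp (2 * √(normSq a) * t - 2 * normSq a))
            ∂(gaussianReal 0 1) := by
  have hnormSq : Integrable (fun z => -(normSq z) / 2 * logb 2 (exp 1)) (stdGaussian n) :=
    ((integrable_normSq_stdGaussian n).neg.div_const 2).mul_const _
  have hsoftplus : Integrable
      (fun z => logb 2 (1 + q / p * exp (2 * (a ⬝ᵥ z) - 2 * normSq a))) (stdGaussian n) :=
    Integrable.logb_one_add_mul_exp
      (((integrable_dotProduct_stdGaussian a).const_mul 2).sub (integrable_const _))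
      (by positivity) 2
  simp only [logb_gaussian_mixture hp hq a]
  rw [integral_add ?_ hsoftplus, integral_add hnormSq (integrable_const _), integral_mul_const,
    integral_div, integral_neg, integral_normSq_stdGaussian, integral_const,
    integral_comp_dotProduct_stdGaussian a
      (g := fun x => logb 2 (1 + q / p * exp (2 * x - 2 * normSq a))) (by unfold logb; fun_prop)]
  · simp [mul_assoc, neg_div]
  · exact hnormSq.add (integrable_const _)

theorem stmt1_general (n : ℕ) (a : Fin n → ℝ) (α : ℝ) (hα : α ∈ Set.Ioo (0 : ℝ) 1) :
    -(α * ∫ z, Real.logb 2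
          (α * Real.exp (-(normSq ((-a + z) + a)) / 2)
            + (1 - α) * Real.exp (-(normSq ((-a + z) - a)) / 2)) ∂(stdGaussian n)
      + (1 - α) * ∫ z, Real.logb 2
          (α * Real.exp (-(normSq ((a + z) + a)) / 2)
            + (1 - α) * Real.exp (-(normSq ((a + z) - a)) / 2)) ∂(stdGaussian n))
      - ((n : ℝ) / 2) * Real.logb 2 (Real.exp 1)
    = Iscalar α (normSq a) := by
  obtain ⟨hα₀, hα₁⟩ := hα
  have hminus (z : Fin n → ℝ) : (-a + z) + a = z ∧ (-a + z) - a = z - 2 • a :=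
    ⟨by abel, by module⟩
  -- the input `X = +1` is the input `X = -1` for the signal `-a`, with `α` and `1 - α` swapped
  have hplus (z : Fin n → ℝ) : (a + z) + a = z - 2 • -a ∧ (a + z) - a = z :=
    ⟨by module, by abel⟩
  simp only [hminus, hplus, add_comm (α * exp (-normSq (_ - 2 • -a) / 2))]
  rw [integral_logb_gaussian_mixture hα₀ (sub_pos.2 hα₁).le,
    integral_logb_gaussian_mixture (sub_pos.2 hα₁) hα₀.le, normSq_neg, Iscalar, binEnt]
  ring

/-- The mutual information of the binary-input vector-output additive Gaussian channel
`y = X·a + z` (with `P(X = -1) = α`, `z` standard Gaussian on `ℝⁿ`, so that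
`E[f(y)] = α·E[f(-a+z)] + (1-α)·E[f(a+z)]`) equals `I(α, ‖a‖²)`: the channel is
equivalent, in terms of mutual information, to a binary-input scalar Gaussian channel
with SNR `γ = ‖a‖²`, and the mutual information depends on `a` only through `‖a‖²`. -/
theorem stmt1 (n : ℕ) (hn : 1 ≤ n) (a : Fin n → ℝ) (α : ℝ) (hα : α ∈ Set.Ioo (0 : ℝ) 1) :
    -(α * ∫ z, Real.logb 2
          (α * Real.exp (-(normSq ((-a + z) + a)) / 2)
            + (1 - α) * Real.exp (-(normSq ((-a + z) - a)) / 2)) ∂(stdGaussian n)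
      + (1 - α) * ∫ z, Real.logb 2
          (α * Real.exp (-(normSq ((a + z) + a)) / 2)
            + (1 - α) * Real.exp (-(normSq ((a + z) - a)) / 2)) ∂(stdGaussian n))
      - ((n : ℝ) / 2) * Real.logb 2 (Real.exp 1)
    = Iscalar α (normSq a) :=
  stmt1_general n a α hα
end

section
/- Fix S > 0. As α → 0⁺, Ĩ(α,S) = (S·α − (1/2)·(e^{2S} − 1)·α²)·log₂(e) + O(α³). -/
open MeasureTheory ProbabilityTheory Real Filter Asymptotics

/-- `Ĩ(α, S)`: the mutual information of the binary-input additive Gaussian channel with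
additive SNR `S`, a priori probabilities `α, 1-α`, and `W ~ N(0, 2S)`:
`Ĩ(α,S) = H_b(α) − α·E[log₂(1 + ((1-α)/α)·e^{W−S})] − (1-α)·E[log₂(1 + (α/(1-α))·e^{W−S})]`. -/
noncomputable def Itilde (α S : ℝ) : ℝ :=
  binEnt α
    - α * ∫ w, Real.logb 2 (1 + ((1 - α) / α) * Real.exp (w - S))
        ∂(gaussianReal 0 (2 * S).toNNReal)
    - (1 - α) * ∫ w, Real.logb 2 (1 + (α / (1 - α)) * Real.exp (w - S))
        ∂(gaussianReal 0 (2 * S).toNNReal)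

open scoped NNReal Topology

/-!
Put `Z = exp (W - S)`. The Gaussian moment generating function gives `E[Z] = 1`,
`E[Z²] = E[Z⁻¹] = e^{2S}` and `E[Z³] = E[Z⁻²] = e^{6S}`. Factoring
`1 + ((1-α)/α) Z = (Z/α) (1 + α (Z⁻¹ - 1))` and using `E[W] = 0`, the term `-α log α` of the
entropy cancels and, in nats,
`Ĩ = S α - (1-α) log (1-α) - α E[log (1 + α (Z⁻¹ - 1))] - (1-α) E[log (1 + q Z)]`
with `q = α / (1-α)`. Each logarithm is replaced by its Taylor polynomial, with a remainder
bounded by a polynomial in `Z` or `Z⁻¹` and hence of finite Gaussian mean; collecting the terms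
gives `S α - (e^{2S} - 1) α² / 2 + O(α³)`.
-/

lemma abs_sum_range_add_log_one_sub_le {x : ℝ} (hx : |x| ≤ 1 / 2) (n : ℕ) :
    |∑ i ∈ Finset.range n, x ^ (i + 1) / (i + 1) + log (1 - x)| ≤ 2 * |x| ^ (n + 1) := by
  refine (abs_log_sub_add_sum_range_le (hx.trans_lt (by norm_num)) n).trans ?_
  rw [div_le_iff₀ (by linarith)]
  nlinarith [pow_nonneg (abs_nonneg x) (n + 1)]

lemma abs_log_one_add_sub_le {t : ℝ} (ht : -(1 / 2) ≤ t) : |log (1 + t) - t| ≤ 2 * t ^ 2 := by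
  rcases le_or_gt t (1 / 2) with ht' | ht'
  · have h := abs_sum_range_add_log_one_sub_le (x := -t) (abs_le.2 ⟨by linarith, by linarith⟩) 1
    convert h using 2
    · norm_num
      ring
    · simp
  · have hpos : 0 ≤ log (1 + t) := log_nonneg (by linarith)
    have hle : log (1 + t) ≤ t := by linarith [log_le_sub_one_of_pos (by linarith : 0 < 1 + t)]
    rw [abs_le]
    constructor <;> nlinarith

lemma abs_log_one_add_sub_sub_le {u : ℝ} (hu : 0 ≤ u) :
    |log (1 + u) - (u - u ^ 2 / 2)| ≤ 2 * u ^ 3 := by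
  rcases le_or_gt u (1 / 2) with hu' | hu'
  · have h := abs_sum_range_add_log_one_sub_le (x := -u) (abs_le.2 ⟨by linarith, by linarith⟩) 2
    rw [abs_neg, abs_of_nonneg hu] at h
    convert h using 2
    simp only [Finset.sum_range_succ, Finset.sum_range_zero]
    norm_num
    ring
  · have hlow : 2 * u / (u + 2) ≤ log (1 + u) := le_log_one_add_of_nonneg hu
    have hle : log (1 + u) ≤ u := by linarith [log_le_sub_one_of_pos (by linarith : 0 < 1 + u)]
    rw [div_le_iff₀ (by linarith)] at hlow
    rw [abs_le]
    constructor <;> nlinarith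

lemma isBigO_pow_nhdsGT_zero_of_abs_le {f : ℝ → ℝ} {C ε : ℝ} {n : ℕ} (hε : 0 < ε)
    (h : ∀ α, 0 < α → α < ε → |f α| ≤ C * α ^ n) : f =O[𝓝[>] 0] (· ^ n) := by
  refine IsBigO.of_bound C ?_
  filter_upwards [Ioo_mem_nhdsGT hε] with α ⟨hα₀, hα⟩
  rw [norm_eq_abs, norm_eq_abs, abs_of_pos (pow_pos hα₀ n)]
  exact h α hα₀ hα

lemma isBigO_neg_one_sub_mul_log_one_sub :
    (fun α : ℝ ↦ -((1 - α) * log (1 - α)) - (α - α ^ 2 / 2)) =O[𝓝[>] 0] (· ^ 3) := by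
  refine isBigO_pow_nhdsGT_zero_of_abs_le (C := 3) (by norm_num : (0 : ℝ) < 1 / 2)
    fun α hα₀ hα ↦ ?_
  have h : |α + α ^ 2 / 2 + log (1 - α)| ≤ 2 * α ^ 3 := by
    convert abs_sum_range_add_log_one_sub_le (abs_le.2 ⟨by linarith, hα.le⟩) 2 using 2
    · simp only [Finset.sum_range_succ, Finset.sum_range_zero]
      norm_num
    · rw [abs_of_pos hα₀]
  have hsplit : -((1 - α) * log (1 - α)) - (α - α ^ 2 / 2)
      = -((1 - α) * (α + α ^ 2 / 2 + log (1 - α))) - α ^ 3 / 2 := by ring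
  rw [hsplit]
  rw [abs_le] at h ⊢
  constructor <;> nlinarith [pow_pos hα₀ 3]

lemma integrable_and_abs_integral_sub_le {X : Type*} [MeasurableSpace X] {μ : Measure X}
    {f g h : X → ℝ} (hfg : ∀ x, |f x - g x| ≤ h x) (hf : AEStronglyMeasurable f μ)
    (hg : Integrable g μ) (hh : Integrable h μ) :
    Integrable f μ ∧ |∫ x, f x ∂μ - ∫ x, g x ∂μ| ≤ ∫ x, h x ∂μ := by
  have hfg' : Integrable (f - g) μ :=
    hh.mono' (hf.sub hg.aestronglyMeasurable) (ae_of_all _ hfg)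
  have hf' : Integrable f μ := by simpa only [sub_add_cancel] using hfg'.add hg
  refine ⟨hf', ?_⟩
  rw [← integral_sub hf' hg]
  exact abs_integral_le_integral_abs.trans (integral_mono hfg'.abs hh hfg)

lemma integral_exp_mul_add_gaussianReal (v : ℝ≥0) (c b : ℝ) :
    ∫ x, exp (c * x + b) ∂gaussianReal 0 v = exp (v * c ^ 2 / 2 + b) := by
  have h := congrFun (mgf_fun_id_gaussianReal (μ := 0) (v := v)) c
  simp only [mgf, zero_mul, zero_add] at h
  simp_rw [exp_add, integral_mul_const, h]

lemma integrable_exp_mul_add_gaussianReal (v : ℝ≥0) (c b : ℝ) :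
    Integrable (fun x ↦ exp (c * x + b)) (gaussianReal 0 v) := by
  simp_rw [exp_add]
  exact (integrable_exp_mul_gaussianReal c).mul_const _

noncomputable def expectLogOneAdd (S q : ℝ) : ℝ :=
  ∫ w, log (1 + q * exp (w - S)) ∂gaussianReal 0 (2 * S).toNNReal

noncomputable def expectLogOneAddInv (S α : ℝ) : ℝ :=
  ∫ w, log (1 + α * (exp (S - w) - 1)) ∂gaussianReal 0 (2 * S).toNNReal

section

variable {S : ℝ}

lemma integral_exp_mul_add_gaussianReal_two_mul (hS : 0 ≤ S) (c b : ℝ) :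
    ∫ w, exp (c * w + b) ∂gaussianReal 0 (2 * S).toNNReal = exp (S * c ^ 2 + b) := by
  rw [integral_exp_mul_add_gaussianReal, Real.coe_toNNReal _ (by positivity)]
  ring_nf

lemma integrable_and_abs_expectLogOneAddInv_sub_le (hS : 0 ≤ S) {α : ℝ} (hα₀ : 0 ≤ α)
    (hα : α ≤ 1 / 2) :
    Integrable (fun w ↦ log (1 + α * (exp (S - w) - 1))) (gaussianReal 0 (2 * S).toNNReal) ∧
      |expectLogOneAddInv S α - α * (exp (2 * S) - 1)| ≤ 2 * (exp (6 * S) + 1) * α ^ 2 := by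
  have hI₁ := integrable_exp_mul_add_gaussianReal (2 * S).toNNReal (-1) S
  have hI₂ := integrable_exp_mul_add_gaussianReal (2 * S).toNNReal (-2) (2 * S)
  have hg : ∫ w, (α * exp (-1 * w + S) - α) ∂gaussianReal 0 (2 * S).toNNReal
      = α * (exp (2 * S) - 1) := by
    rw [integral_sub (hI₁.const_mul α) (integrable_const α), integral_const_mul,
      integral_exp_mul_add_gaussianReal_two_mul hS, integral_const]
    simp only [probReal_univ, one_smul]
    ring_nf
  have hh : ∫ w, 2 * α ^ 2 * (exp (-2 * w + 2 * S) + 1) ∂gaussianReal 0 (2 * S).toNNReal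
      = 2 * (exp (6 * S) + 1) * α ^ 2 := by
    rw [integral_const_mul, integral_add hI₂ (integrable_const 1),
      integral_exp_mul_add_gaussianReal_two_mul hS, integral_const]
    simp only [probReal_univ, one_smul]
    ring_nf
  have hpt (w : ℝ) : |log (1 + α * (exp (S - w) - 1)) - (α * exp (-1 * w + S) - α)|
      ≤ 2 * α ^ 2 * (exp (-2 * w + 2 * S) + 1) := by
    have hsq : exp (-2 * w + 2 * S) = exp (S - w) ^ 2 := by
      rw [← exp_nat_mul]; ring_nf
    have hE := exp_pos (S - w)
    calc _ = |log (1 + α * (exp (S - w) - 1)) - α * (exp (S - w) - 1)| := by ring_nf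
      _ ≤ 2 * (α * (exp (S - w) - 1)) ^ 2 := abs_log_one_add_sub_le (by nlinarith)
      _ ≤ _ := by rw [hsq]; nlinarith [sq_nonneg α]
  have key := integrable_and_abs_integral_sub_le hpt
    (measurable_log.comp (by fun_prop)).aestronglyMeasurable
    ((hI₁.const_mul α).sub (integrable_const α))
    ((hI₂.add (integrable_const 1)).const_mul (2 * α ^ 2))
  rw [hg, hh] at key
  exact key

lemma abs_expectLogOneAdd_sub_le (hS : 0 ≤ S) {q : ℝ} (hq : 0 ≤ q) :
    |expectLogOneAdd S q - (q - exp (2 * S) * q ^ 2 / 2)| ≤ 2 * exp (6 * S) * q ^ 3 := by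
  have hI₁ := integrable_exp_mul_add_gaussianReal (2 * S).toNNReal 1 (-S)
  have hI₂ := integrable_exp_mul_add_gaussianReal (2 * S).toNNReal 2 (-(2 * S))
  have hI₃ := integrable_exp_mul_add_gaussianReal (2 * S).toNNReal 3 (-(3 * S))
  have hg : ∫ w, (q * exp (1 * w + -S) - q ^ 2 / 2 * exp (2 * w + -(2 * S)))
      ∂gaussianReal 0 (2 * S).toNNReal = q - exp (2 * S) * q ^ 2 / 2 := by
    rw [integral_sub (hI₁.const_mul q) (hI₂.const_mul _), integral_const_mul, integral_const_mul,
      integral_exp_mul_add_gaussianReal_two_mul hS, integral_exp_mul_add_gaussianReal_two_mul hS]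
    ring_nf
    simp only [exp_zero, mul_one]
  have hh : ∫ w, 2 * q ^ 3 * exp (3 * w + -(3 * S)) ∂gaussianReal 0 (2 * S).toNNReal
      = 2 * exp (6 * S) * q ^ 3 := by
    rw [integral_const_mul, integral_exp_mul_add_gaussianReal_two_mul hS]
    ring_nf
  have hpt (w : ℝ) : |log (1 + q * exp (w - S))
      - (q * exp (1 * w + -S) - q ^ 2 / 2 * exp (2 * w + -(2 * S)))|
      ≤ 2 * q ^ 3 * exp (3 * w + -(3 * S)) := by
    have h₂ : exp (2 * w + -(2 * S)) = exp (w - S) ^ 2 := by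
      rw [← exp_nat_mul]; ring_nf
    have h₃ : exp (3 * w + -(3 * S)) = exp (w - S) ^ 3 := by
      rw [← exp_nat_mul]; ring_nf
    rw [h₂, h₃, one_mul, ← sub_eq_add_neg]
    convert abs_log_one_add_sub_sub_le (mul_nonneg hq (exp_pos (w - S)).le) using 1
    · congr 1; ring
    · ring
  have key := integrable_and_abs_integral_sub_le hpt
    (measurable_log.comp (by fun_prop)).aestronglyMeasurable
    ((hI₁.const_mul q).sub (hI₂.const_mul _)) (hI₃.const_mul _)
  rw [hg, hh] at key
  exact key.2

lemma log_two_mul_Itilde (hS : 0 ≤ S) {α : ℝ} (hα₀ : 0 < α) (hα : α ≤ 1 / 2) :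
    log 2 * Itilde α S = S * α - (1 - α) * log (1 - α) - α * expectLogOneAddInv S α
      - (1 - α) * expectLogOneAdd S (α / (1 - α)) := by
  have hα₁ : 1 - α ≠ 0 := by linarith
  have hpoint (w : ℝ) : log (1 + (1 - α) / α * exp (w - S))
      = w - (S + log α) + log (1 + α * (exp (S - w) - 1)) := by
    have hfac : 1 + (1 - α) / α * exp (w - S)
        = exp (w - S) / α * (1 + α * (exp (S - w) - 1)) := by
      rw [exp_sub, exp_sub]
      field_simp
      ring
    have hpos : 0 < 1 + α * (exp (S - w) - 1) := by nlinarith [exp_pos (S - w)]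
    rw [hfac, log_mul (by positivity) hpos.ne', log_div (exp_pos _).ne' hα₀.ne', log_exp]
    ring
  have hmean : ∫ w, log (1 + (1 - α) / α * exp (w - S)) ∂gaussianReal 0 (2 * S).toNNReal
      = -S - log α + expectLogOneAddInv S α := by
    have hid : Integrable (fun w : ℝ ↦ w) (gaussianReal 0 (2 * S).toNNReal) :=
      (memLp_id_gaussianReal 1).integrable le_rfl
    simp_rw [hpoint]
    rw [integral_add (f := fun w ↦ w - (S + log α)) (hid.sub (integrable_const _))
      (integrable_and_abs_expectLogOneAddInv_sub_le hS hα₀.le hα).1,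
      integral_sub hid (integrable_const _), integral_id_gaussianReal, integral_const]
    simp only [probReal_univ, smul_eq_mul, one_mul, expectLogOneAddInv]
    ring
  simp only [Itilde, binEnt, logb, integral_div, hmean]
  rw [expectLogOneAdd]
  field_simp
  ring

lemma isBigO_mul_expectLogOneAddInv_sub (hS : 0 ≤ S) :
    (fun α ↦ α * (expectLogOneAddInv S α - α * (exp (2 * S) - 1))) =O[𝓝[>] 0] (· ^ 3) := by
  refine isBigO_pow_nhdsGT_zero_of_abs_le (C := 2 * (exp (6 * S) + 1))
    (by norm_num : (0 : ℝ) < 1 / 2) fun α hα₀ hα ↦ ?_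
  have h := (integrable_and_abs_expectLogOneAddInv_sub_le hS hα₀.le hα.le).2
  rw [abs_mul, abs_of_pos hα₀]
  calc α * |expectLogOneAddInv S α - α * (exp (2 * S) - 1)|
      ≤ α * (2 * (exp (6 * S) + 1) * α ^ 2) := by gcongr
    _ = 2 * (exp (6 * S) + 1) * α ^ 3 := by ring

lemma isBigO_one_sub_mul_expectLogOneAdd_sub (hS : 0 ≤ S) :
    (fun α ↦ (1 - α) * (expectLogOneAdd S (α / (1 - α))
      - (α / (1 - α) - exp (2 * S) * (α / (1 - α)) ^ 2 / 2))) =O[𝓝[>] 0] (· ^ 3) := by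
  refine isBigO_pow_nhdsGT_zero_of_abs_le (C := 16 * exp (6 * S))
    (by norm_num : (0 : ℝ) < 1 / 2) fun α hα₀ hα ↦ ?_
  have hq₀ : 0 ≤ α / (1 - α) := div_nonneg hα₀.le (by linarith)
  have hq : α / (1 - α) ≤ 2 * α := by rw [div_le_iff₀ (by linarith)]; nlinarith
  have h := abs_expectLogOneAdd_sub_le hS hq₀
  rw [abs_mul, abs_of_pos (by linarith : 0 < 1 - α)]
  calc (1 - α) * |expectLogOneAdd S (α / (1 - α))
        - (α / (1 - α) - exp (2 * S) * (α / (1 - α)) ^ 2 / 2)|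
      ≤ 1 * (2 * exp (6 * S) * (2 * α) ^ 3) := by
        gcongr
        · linarith
        · exact h.trans (by gcongr)
    _ = 16 * exp (6 * S) * α ^ 3 := by ring

end

/-- As `α → 0⁺`, `Ĩ(α,S) = (S·α − (1/2)(e^{2S} − 1)α²)·log₂ e + O(α³)`. -/
theorem stmt11 (S : ℝ) (hS : 0 < S) :
    (fun α : ℝ => Itilde α S
        - (S * α - (1 / 2) * (Real.exp (2 * S) - 1) * α ^ 2) * Real.logb 2 (Real.exp 1))
      =O[nhdsWithin 0 (Set.Ioi 0)] fun α : ℝ => α ^ 3 := by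
  have hS' := hS.le
  -- `(1 - α) q² = α² + α³ / (1 - α)`: the second-order terms leave this cubic remainder
  have hrest : (fun α : ℝ ↦ α ^ 3 * (exp (2 * S) / (2 * (1 - α)))) =O[𝓝[>] 0] (· ^ 3) := by
    have hc : ContinuousAt (fun α : ℝ ↦ exp (2 * S) / (2 * (1 - α))) 0 := by
      fun_prop (disch := norm_num)
    simpa only [mul_one] using (isBigO_refl (fun α : ℝ ↦ α ^ 3) (𝓝[>] 0)).mul
      ((hc.tendsto.mono_left nhdsWithin_le_nhds).isBigO_one ℝ)
  have hsum := (((isBigO_neg_one_sub_mul_log_one_sub.sub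
    (isBigO_mul_expectLogOneAddInv_sub hS')).sub
    (isBigO_one_sub_mul_expectLogOneAdd_sub hS')).add hrest).const_mul_left (log 2)⁻¹
  refine hsum.congr' ?_ EventuallyEq.rfl
  filter_upwards [Ioo_mem_nhdsGT (by norm_num : (0 : ℝ) < 1 / 2)] with α ⟨hα₀, hα⟩
  have hlog2 : log 2 ≠ 0 := (log_pos one_lt_two).ne'
  have hα₁ : 1 - α ≠ 0 := by linarith
  rw [logb, log_exp, eq_comm, ← mul_right_inj' hlog2, mul_sub, log_two_mul_Itilde hS' hα₀ hα.le]
  field_simp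
  ring
end

section
/- For every α ∈ (0,1) and every S > 0, the first-order approximation is an upper bound and the second-order approximation is a lower bound: (S·α − (1/2)·(e^{2S} − 1)·α²)·log₂(e) ≤ Ĩ(α,S) ≤ S·α·log₂(e). -/
open MeasureTheory ProbabilityTheory Real Filter Asymptotics

open scoped NNReal ENNReal
open Set

/-!
Put `T = W - S ~ N(-S, 2S)` and `σ(t) = 1 - α + α eᵗ`. Tilting `N(-S, 2S)` by `eᵗ` gives
`N(S, 2S)`, the law of `-T`, so `E[eᵀ f(T)] = E[f(-T)]`. Together with
`α + (1 - α) eᵗ = eᵗ σ(-t)` this makes the entropy terms cancel: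
`Ĩ(α, S) · ln 2 = S α - E[σ(T) log σ(T)]`.

Since `E[σ(T)] = 1`, the bound `z - 1 ≤ z log z` gives `E[σ(T) log σ(T)] ≥ 0`. For the other
side, integrating the convexity bound `1 / (1 + a x) ≤ (1 - a) + a / (1 + x)` twice in `a` gives
`(1 + a x) log (1 + a x) ≤ a x + (a²/2 - a³/6) x² + (a³/6) x² / (1 + x)`; at `x = eᵀ - 1` both
`E[x²]` and `E[x² / (1 + x)]` equal `e^{2S} - 1`, so the cubic terms cancel in expectation.
-/

namespace ProbabilityTheory

variable {μ : ℝ} {v : ℝ≥0}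

lemma integral_exp_mul_gaussianReal (t : ℝ) :
    ∫ x, exp (t * x) ∂gaussianReal μ v = exp (μ * t + v * t ^ 2 / 2) :=
  congrFun (mgf_fun_id_gaussianReal (μ := μ) (v := v)) t

lemma gaussianPDFReal_mul_exp (t x : ℝ) :
    gaussianPDFReal μ v x * exp (t * x) =
      exp (μ * t + v * t ^ 2 / 2) * gaussianPDFReal (μ + v * t) v x := by
  by_cases hv : v = 0
  · simp [hv, gaussianPDFReal_zero_var]
  have hv' : (v : ℝ) ≠ 0 := by exact_mod_cast hv
  have h : -(x - μ) ^ 2 / (2 * v) + t * x =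
      μ * t + v * t ^ 2 / 2 + -(x - (μ + v * t)) ^ 2 / (2 * v) := by
    field_simp
    ring
  simp only [gaussianPDFReal]
  rw [mul_assoc, ← exp_add, h, exp_add]
  ring

lemma gaussianReal_tilted_mul (hv : v ≠ 0) (t : ℝ) :
    (gaussianReal μ v).tilted (t * ·) = gaussianReal (μ + v * t) v := by
  rw [Measure.tilted, integral_exp_mul_gaussianReal, gaussianReal_of_var_ne_zero _ hv,
    gaussianReal_of_var_ne_zero _ hv, ← withDensity_mul _ (measurable_gaussianPDF _ _)
      (by fun_prop)]
  congr 1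
  ext x
  simp only [Pi.mul_apply, gaussianPDF, ← ENNReal.ofReal_mul (gaussianPDFReal_nonneg _ _ _)]
  rw [mul_div_assoc', gaussianPDFReal_mul_exp, mul_div_cancel_left₀ _ (exp_pos _).ne']

lemma integral_exp_mul_mul_gaussianReal (hv : v ≠ 0) (t : ℝ) (g : ℝ → ℝ) :
    ∫ x, exp (t * x) * g x ∂gaussianReal μ v =
      exp (μ * t + v * t ^ 2 / 2) * ∫ x, g x ∂gaussianReal (μ + v * t) v := by
  rw [← gaussianReal_tilted_mul hv, integral_tilted, integral_exp_mul_gaussianReal,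
    ← integral_const_mul]
  congr 1 with x
  rw [smul_eq_mul, ← mul_assoc, mul_div_cancel₀ _ (exp_pos _).ne']

lemma integrable_exp_mul_mul_gaussianReal_iff (hv : v ≠ 0) (t : ℝ) {g : ℝ → ℝ} :
    Integrable (fun x ↦ exp (t * x) * g x) (gaussianReal μ v) ↔
      Integrable g (gaussianReal (μ + v * t) v) := by
  rw [← gaussianReal_tilted_mul hv, integrable_tilted_iff (integrable_exp_mul_gaussianReal t)]
  rfl

lemma integrable_fun_id_gaussianReal : Integrable (fun x ↦ x) (gaussianReal μ v) :=
  (memLp_id_gaussianReal 1).integrable le_rfl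

lemma integrable_exp_gaussianReal : Integrable (fun x ↦ exp x) (gaussianReal μ v) := by
  simpa using integrable_exp_mul_gaussianReal (μ := μ) (v := v) 1

lemma integrable_exp_neg_gaussianReal : Integrable (fun x ↦ exp (-x)) (gaussianReal μ v) := by
  simpa using integrable_exp_mul_gaussianReal (μ := μ) (v := v) (-1)

lemma integral_comp_neg_gaussianReal (g : ℝ → ℝ) :
    ∫ x, g (-x) ∂gaussianReal μ v = ∫ x, g x ∂gaussianReal (-μ) v := by
  rw [← gaussianReal_map_neg]
  exact (integral_map_equiv (MeasurableEquiv.neg ℝ) g).symm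

lemma integrable_comp_neg_gaussianReal_iff {g : ℝ → ℝ} :
    Integrable (fun x ↦ g (-x)) (gaussianReal μ v) ↔ Integrable g (gaussianReal (-μ) v) := by
  rw [← gaussianReal_map_neg]
  exact (integrable_map_equiv (MeasurableEquiv.neg ℝ) g).symm

lemma integral_comp_sub_gaussianReal (g : ℝ → ℝ) (y : ℝ) :
    ∫ x, g (x - y) ∂gaussianReal μ v = ∫ x, g x ∂gaussianReal (μ - y) v := by
  rw [← gaussianReal_map_sub_const]
  exact (integral_map_equiv (MeasurableEquiv.subRight y) g).symm

end ProbabilityTheory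

lemma integrable_log_const_add_mul_exp {Ω : Type*} [MeasurableSpace Ω] {P : Measure Ω}
    [IsFiniteMeasure P] {g : Ω → ℝ} {a b : ℝ} (ha : 0 < a) (hb : 0 ≤ b)
    (hg : Integrable (fun ω ↦ exp (g ω)) P) :
    Integrable (fun ω ↦ log (a + b * exp (g ω))) P := by
  refine ((integrable_const (|log a| + |a - 1|)).add (hg.const_mul b)).mono'
    ((hg.aemeasurable.const_mul b).const_add a).log.aestronglyMeasurable
    (ae_of_all _ fun ω ↦ ?_)
  have hy : 0 ≤ b * exp (g ω) := by positivity
  have hlo : log a ≤ log (a + b * exp (g ω)) := log_le_log ha (by linarith)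
  have hup := log_le_sub_one_of_pos (show 0 < a + b * exp (g ω) by linarith)
  rw [Pi.add_apply, Real.norm_eq_abs, abs_le]
  constructor <;> linarith [neg_abs_le (log a), le_abs_self (a - 1), abs_nonneg (log a),
    abs_nonneg (a - 1)]

lemma integral_logb_one_add_div_mul_exp {P : Measure ℝ} [IsProbabilityMeasure P] {a b : ℝ}
    (ha : 0 < a) (hb : 0 ≤ b) (hP : Integrable (fun t ↦ exp t) P) :
    ∫ t, logb 2 (1 + b / a * exp t) ∂P = (∫ t, log (a + b * exp t) ∂P - log a) / log 2 := by
  have h (t : ℝ) : logb 2 (1 + b / a * exp t) = (log (a + b * exp t) - log a) / log 2 := by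
    rw [logb, ← log_div (by positivity) ha.ne']
    congr 2
    field_simp
  simp_rw [h]
  rw [integral_div, integral_sub (integrable_log_const_add_mul_exp ha hb hP)
    (integrable_const _), integral_const, probReal_univ, one_smul]

section

variable {S : ℝ}

lemma integral_exp_mul_eq_integral_comp_neg (hS : 0 < S) (g : ℝ → ℝ) :
    ∫ t, exp t * g t ∂gaussianReal (-S) (2 * S).toNNReal =
      ∫ t, g (-t) ∂gaussianReal (-S) (2 * S).toNNReal := by
  have hv : (2 * S).toNNReal ≠ 0 := by simpa using hS
  have h := integral_exp_mul_mul_gaussianReal (μ := -S) hv 1 g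
  rw [Real.coe_toNNReal _ (by linarith)] at h
  rw [integral_comp_neg_gaussianReal, neg_neg]
  simpa [show -S + 2 * S = S by ring, show -S + 2 * S / 2 = 0 by ring] using h

lemma integrable_exp_mul_iff_comp_neg (hS : 0 < S) {g : ℝ → ℝ} :
    Integrable (fun t ↦ exp t * g t) (gaussianReal (-S) (2 * S).toNNReal) ↔
      Integrable (fun t ↦ g (-t)) (gaussianReal (-S) (2 * S).toNNReal) := by
  have hv : (2 * S).toNNReal ≠ 0 := by simpa using hS
  have h := integrable_exp_mul_mul_gaussianReal_iff (μ := -S) hv 1 (g := g)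
  rw [Real.coe_toNNReal _ (by linarith)] at h
  rw [integrable_comp_neg_gaussianReal_iff, neg_neg]
  simpa [show -S + 2 * S = S by ring] using h

lemma integrable_exp_combination (a b c d : ℝ) :
    Integrable (fun t ↦ a + b * exp t + c * exp (2 * t) + d * exp (-t))
      (gaussianReal (-S) (2 * S).toNNReal) :=
  (((integrable_const a).add (integrable_exp_gaussianReal.const_mul b)).add
    ((integrable_exp_mul_gaussianReal 2).const_mul c)).add
    (integrable_exp_neg_gaussianReal.const_mul d)

lemma integral_exp_combination (hS : 0 ≤ S) (a b c d : ℝ) :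
    ∫ t, (a + b * exp t + c * exp (2 * t) + d * exp (-t)) ∂gaussianReal (-S) (2 * S).toNNReal =
      a + b + (c + d) * exp (2 * S) := by
  have hmgf (c : ℝ) :
      ∫ t, exp (c * t) ∂gaussianReal (-S) (2 * S).toNNReal = exp (c * (c - 1) * S) := by
    rw [integral_exp_mul_gaussianReal, Real.coe_toNNReal _ (by linarith)]
    ring_nf
  have e1 := hmgf 1
  have e2 := hmgf 2
  have em1 := hmgf (-1)
  norm_num at e1 e2 em1
  have i1 : Integrable (fun t ↦ a + b * exp t) (gaussianReal (-S) (2 * S).toNNReal) :=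
    (integrable_const a).add (integrable_exp_gaussianReal.const_mul b)
  have i2 : Integrable (fun t ↦ a + b * exp t + c * exp (2 * t))
      (gaussianReal (-S) (2 * S).toNNReal) :=
    i1.add ((integrable_exp_mul_gaussianReal 2).const_mul c)
  rw [integral_add i2 (integrable_exp_neg_gaussianReal.const_mul d),
    integral_add i1 ((integrable_exp_mul_gaussianReal 2).const_mul c),
    integral_add (integrable_const a) (integrable_exp_gaussianReal.const_mul b), integral_const,
    integral_const_mul, integral_const_mul, integral_const_mul, e1, e2, em1]
  simp only [probReal_univ, smul_eq_mul, one_mul, mul_one]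
  ring

lemma integrable_exp_mul_log_const_add_mul_exp (hS : 0 < S) {a b : ℝ} (ha : 0 < a)
    (hb : 0 ≤ b) :
    Integrable (fun t ↦ exp t * log (a + b * exp t)) (gaussianReal (-S) (2 * S).toNNReal) :=
  (integrable_exp_mul_iff_comp_neg hS).2 <|
    integrable_log_const_add_mul_exp ha hb integrable_exp_neg_gaussianReal

lemma integral_log_const_add_mul_exp (hS : 0 < S) {a b : ℝ} (ha : 0 ≤ a) (hb : 0 < b) :
    ∫ t, log (a + b * exp t) ∂gaussianReal (-S) (2 * S).toNNReal =
      -S + ∫ t, exp t * log (b + a * exp t) ∂gaussianReal (-S) (2 * S).toNNReal := by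
  have h (t : ℝ) : log (a + b * exp t) = t + log (b + a * exp (-t)) := by
    rw [← log_exp t, ← log_mul (exp_pos t).ne' (by positivity), log_exp, mul_add,
      ← mul_assoc, mul_comm (exp t) a, mul_assoc, ← exp_add, add_neg_cancel, exp_zero]
    ring_nf
  simp_rw [h]
  rw [integral_add integrable_fun_id_gaussianReal
      (integrable_log_const_add_mul_exp hb ha integrable_exp_neg_gaussianReal),
    integral_id_gaussianReal, integral_exp_mul_eq_integral_comp_neg hS]

end

lemma sub_one_le_mul_log {z : ℝ} (hz : 0 < z) : z - 1 ≤ z * log z := by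
  have h := mul_le_mul_of_nonneg_left (one_sub_inv_le_log_of_pos hz) hz.le
  rwa [mul_sub, mul_one, mul_inv_cancel₀ hz.ne'] at h

lemma le_of_hasDerivAt_nonneg_Icc {f f' : ℝ → ℝ} {a b : ℝ}
    (hf : ∀ u ∈ Icc a b, HasDerivAt f (f' u) u) (hf' : ∀ u ∈ Icc a b, 0 ≤ f' u)
    {u : ℝ} (hu : u ∈ Icc a b) : f a ≤ f u := by
  have hmono : MonotoneOn f (Icc a b) := by
    refine monotoneOn_of_deriv_nonneg (convex_Icc a b)
      (fun x hx ↦ (hf x hx).continuousAt.continuousWithinAt) (fun x hx ↦ ?_) (fun x hx ↦ ?_)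
    all_goals rw [interior_Icc] at hx
    · exact (hf x (Ioo_subset_Icc_self hx)).differentiableAt.differentiableWithinAt
    · rw [(hf x (Ioo_subset_Icc_self hx)).deriv]
      exact hf' x (Ioo_subset_Icc_self hx)
  exact hmono (left_mem_Icc.2 (hu.1.trans hu.2)) hu hu.1

lemma one_add_mul_mul_log_one_add_mul_le {x a : ℝ} (hx : -1 < x) (ha : a ∈ Icc (0 : ℝ) 1) :
    (1 + a * x) * log (1 + a * x) ≤
      a * x + (a ^ 2 / 2 - a ^ 3 / 6) * x ^ 2 + a ^ 3 / 6 * (x ^ 2 / (1 + x)) := by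
  have hx' : 0 < 1 + x := by linarith
  have hpos : ∀ u ∈ Icc (0 : ℝ) 1, 0 < 1 + u * x := fun u hu ↦ by
    nlinarith [mul_nonneg hu.1 hx'.le, hu.2]
  have hlin (u : ℝ) : HasDerivAt (fun u ↦ 1 + u * x) x u := by
    simpa using ((hasDerivAt_id u).mul_const x).const_add 1
  set G : ℝ → ℝ := fun u ↦ (u - u ^ 2 / 2) * x ^ 2 + u ^ 2 / 2 * (x ^ 2 / (1 + x)) -
    x * log (1 + u * x)
  -- `G' = (1 - u) x² + u x² / (1 + x) - x² / (1 + u x) ≥ 0` by convexity of `u ↦ 1 / (1 + u x)`.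
  have hG : ∀ u ∈ Icc (0 : ℝ) 1,
      HasDerivAt G (u * (1 - u) * x ^ 4 / ((1 + x) * (1 + u * x))) u := fun u hu ↦ by
    have h := ((((hasDerivAt_id u).sub ((hasDerivAt_pow 2 u).div_const 2)).mul_const (x ^ 2)).add
      (((hasDerivAt_pow 2 u).div_const 2).mul_const (x ^ 2 / (1 + x)))).sub
      (((hlin u).log (hpos u hu).ne').const_mul x)
    refine h.congr_deriv ?_
    have := (hpos u hu).ne'
    have := hx'.ne'
    norm_num
    field_simp
    ring
  have hG_nonneg : ∀ u ∈ Icc (0 : ℝ) 1, 0 ≤ G u := fun u hu ↦ by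
    have h := le_of_hasDerivAt_nonneg_Icc hG (fun u hu ↦ by
      have := hpos u hu
      have : 0 ≤ 1 - u := by linarith [hu.2]
      have := hu.1
      positivity) hu
    simpa [G] using h
  have hF : ∀ u ∈ Icc (0 : ℝ) 1, HasDerivAt (fun u ↦ u * x + (u ^ 2 / 2 - u ^ 3 / 6) * x ^ 2 +
      u ^ 3 / 6 * (x ^ 2 / (1 + x)) - (1 + u * x) * log (1 + u * x)) (G u) u := fun u hu ↦ by
    have h := ((((hasDerivAt_id u).mul_const x).add ((((hasDerivAt_pow 2 u).div_const 2).sub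
      ((hasDerivAt_pow 3 u).div_const 6)).mul_const (x ^ 2))).add
      (((hasDerivAt_pow 3 u).div_const 6).mul_const (x ^ 2 / (1 + x)))).sub
      ((hlin u).mul ((hlin u).log (hpos u hu).ne'))
    refine h.congr_deriv ?_
    rw [mul_div_cancel₀ x (hpos u hu).ne']
    simp only [G]
    norm_num
    ring
  have h := le_of_hasDerivAt_nonneg_Icc hF hG_nonneg ha
  simp only [zero_mul, add_zero, log_one, mul_zero] at h
  linarith

lemma mul_log_one_sub_add_mul_exp_le {a : ℝ} (ha : a ∈ Icc (0 : ℝ) 1) (t : ℝ) :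
    (1 - a + a * exp t) * log (1 - a + a * exp t) ≤
      (-a + a ^ 2 / 2 - a ^ 3 / 2) + (a - a ^ 2 + a ^ 3 / 2) * exp t +
        (a ^ 2 / 2 - a ^ 3 / 6) * exp (2 * t) + a ^ 3 / 6 * exp (-t) := by
  have h := one_add_mul_mul_log_one_add_mul_le (x := exp t - 1) (by linarith [exp_pos t]) ha
  have hsq : (exp t - 1) ^ 2 / (1 + (exp t - 1)) = exp t - 2 + exp (-t) := by
    rw [exp_neg]
    field_simp
    ring
  rw [hsq, show 1 + a * (exp t - 1) = 1 - a + a * exp t by ring] at h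
  refine h.trans_eq ?_
  rw [show exp (2 * t) = exp t ^ 2 by rw [← exp_nat_mul]; norm_num]
  ring

section

variable {α S : ℝ}

lemma Itilde_eq (hα : α ∈ Ioo 0 1) (hS : 0 < S) :
    Itilde α S = (S * α - ∫ t, (1 - α + α * exp t) * log (1 - α + α * exp t)
      ∂gaussianReal (-S) (2 * S).toNNReal) / log 2 := by
  obtain ⟨hα0, hα1⟩ := hα
  have hα1' : 0 < 1 - α := by linarith
  have hexp : Integrable (fun t ↦ exp t) (gaussianReal (-S) (2 * S).toNNReal) :=
    integrable_exp_gaussianReal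
  have hσ : ∫ t, (1 - α + α * exp t) * log (1 - α + α * exp t)
      ∂gaussianReal (-S) (2 * S).toNNReal =
      (1 - α) * ∫ t, log (1 - α + α * exp t) ∂gaussianReal (-S) (2 * S).toNNReal +
        α * ∫ t, exp t * log (1 - α + α * exp t) ∂gaussianReal (-S) (2 * S).toNNReal := by
    simp_rw [add_mul, mul_assoc]
    rw [integral_add ((integrable_log_const_add_mul_exp hα1' hα0.le hexp).const_mul _)
      ((integrable_exp_mul_log_const_add_mul_exp hS hα1' hα0.le).const_mul _),
      integral_const_mul, integral_const_mul]
  have h1 := integral_comp_sub_gaussianReal (μ := 0) (v := (2 * S).toNNReal)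
    (fun t ↦ logb 2 (1 + (1 - α) / α * exp t)) S
  have h2 := integral_comp_sub_gaussianReal (μ := 0) (v := (2 * S).toNNReal)
    (fun t ↦ logb 2 (1 + α / (1 - α) * exp t)) S
  simp only [zero_sub] at h1 h2
  rw [Itilde, binEnt, h1, h2, integral_logb_one_add_div_mul_exp hα0 hα1'.le hexp,
    integral_logb_one_add_div_mul_exp hα1' hα0.le hexp,
    integral_log_const_add_mul_exp hS hα0.le hα1', hσ, logb, logb]
  field_simp
  ring

lemma integrable_mul_log_one_sub_add_mul_exp (hα : α ∈ Ioo 0 1) (hS : 0 < S) :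
    Integrable (fun t ↦ (1 - α + α * exp t) * log (1 - α + α * exp t))
      (gaussianReal (-S) (2 * S).toNNReal) := by
  have h1 := (integrable_log_const_add_mul_exp (sub_pos.2 hα.2) hα.1.le
    (integrable_exp_gaussianReal (μ := -S) (v := (2 * S).toNNReal))).const_mul (1 - α)
  have h2 := (integrable_exp_mul_log_const_add_mul_exp hS (sub_pos.2 hα.2) hα.1.le).const_mul α
  refine (h1.add h2).congr (ae_of_all _ fun t ↦ ?_)
  simp only [Pi.add_apply]
  ring

lemma integral_mul_log_nonneg (hα : α ∈ Ioo 0 1) (hS : 0 < S) :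
    0 ≤ ∫ t, (1 - α + α * exp t) * log (1 - α + α * exp t)
      ∂gaussianReal (-S) (2 * S).toNNReal := by
  have h := integral_mono (integrable_exp_combination (-α) α 0 0)
    (integrable_mul_log_one_sub_add_mul_exp hα hS) fun t ↦ by
      have hσ : 0 < 1 - α + α * exp t := by nlinarith [mul_pos hα.1 (exp_pos t), hα.2]
      have := sub_one_le_mul_log hσ
      simp only
      linarith
  rwa [integral_exp_combination hS.le, neg_add_cancel, zero_add, add_zero, zero_mul] at h

lemma integral_mul_log_le (hα : α ∈ Ioo 0 1) (hS : 0 < S) :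
    ∫ t, (1 - α + α * exp t) * log (1 - α + α * exp t) ∂gaussianReal (-S) (2 * S).toNNReal ≤
      1 / 2 * (exp (2 * S) - 1) * α ^ 2 := by
  refine (integral_mono (integrable_mul_log_one_sub_add_mul_exp hα hS)
    (integrable_exp_combination _ _ _ _)
    (mul_log_one_sub_add_mul_exp_le (Ioo_subset_Icc_self hα))).trans_eq ?_
  rw [integral_exp_combination hS.le]
  ring

end

/-- The first-order approximation `S·α·log₂ e` is an upper bound and the second-order
approximation `(S·α − (1/2)(e^{2S} − 1)α²)·log₂ e` is a lower bound to `Ĩ(α,S)`. -/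
theorem stmt12 (α S : ℝ) (hα : α ∈ Set.Ioo (0 : ℝ) 1) (hS : 0 < S) :
    (S * α - (1 / 2) * (Real.exp (2 * S) - 1) * α ^ 2) * Real.logb 2 (Real.exp 1)
      ≤ Itilde α S
    ∧ Itilde α S ≤ S * α * Real.logb 2 (Real.exp 1) := by
  have hlogb : logb 2 (exp 1) = 1 / log 2 := by rw [logb, log_exp]
  rw [hlogb, Itilde_eq hα hS, ← div_eq_mul_one_div, ← div_eq_mul_one_div]
  have hnonneg := integral_mul_log_nonneg hα hS
  have hle := integral_mul_log_le hα hS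
  constructor
  · gcongr
  · gcongr
    linarith
end
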